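/- arXiv:2008.02606 — 3 statements merged into one kernel-verified Lean document; each statement's English description precedes it below -/
import Mathlib

section
/- Let s = a ⊕ v ⊕ z be a Damek-Ricci algebra. Let v' ⊆ v and z' ⊆ z be linear subspaces such that J_Z(v') ⊆ v' for all Z ∈ z'. Let v'' be the orthogonal complement of v' in v and let z'' be the orthogonal complement of z' in z. Then v'' ⊕ z'' is a Lie subalgebra of s if and only if v'' = 0 or z' = 0. -/
open scoped RealInnerProductSpace

/-!
Closing `v'' ⊕ z''` under the bracket means exactly `[v'', v''] ⊆ z''`. The endomorphisms `J_Z`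
are skew, so for `Z ∈ z'` they preserve `v''` along with `v'`. For `U ∈ v''` and `Z ∈ z'` this
gives `|J_Z U|² = ⟨[U, J_Z U], Z⟩ = 0` once `[v'', v''] ⊆ z''`, and `J_Z² = -|Z|²` makes `J_Z`
injective for `Z ≠ 0`; hence `U = 0` or `Z = 0`.
-/

theorem Submodule.map_mem_orthogonal_of_skew {E : Type*} [NormedAddCommGroup E]
    [InnerProductSpace ℝ E] {f : E →ₗ[ℝ] E} (hf : ∀ x y, ⟪f x, y⟫ = -⟪x, f y⟫)
    {K : Submodule ℝ E} (hK : ∀ x ∈ K, f x ∈ K) {x : E} (hx : x ∈ Kᗮ) : f x ∈ Kᗮ := by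
  rw [Submodule.mem_orthogonal']
  intro y hy
  rw [hf, Submodule.inner_left_of_mem_orthogonal (hK y hy) hx, neg_zero]

theorem prod_bot_bracket_closed_iff {v z : Type*} [AddCommGroup v] [Module ℝ v]
    [AddCommGroup z] [Module ℝ z] (β : v →ₗ[ℝ] v →ₗ[ℝ] z)
    (B : (ℝ × v × z) → (ℝ × v × z) → (ℝ × v × z))
    (hB : ∀ (r r' : ℝ) (U U' : v) (X X' : z),
      B (r, U, X) (r', U', X')
        = (0, (r / 2) • U' - (r' / 2) • U, β U U' + r • X' - r' • X))
    (V : Submodule ℝ v) (W : Submodule ℝ z) :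
    (∀ x ∈ (⊥ : Submodule ℝ ℝ).prod (V.prod W), ∀ y ∈ (⊥ : Submodule ℝ ℝ).prod (V.prod W),
        B x y ∈ (⊥ : Submodule ℝ ℝ).prod (V.prod W))
      ↔ ∀ U ∈ V, ∀ U' ∈ V, β U U' ∈ W := by
  constructor
  · intro hclosed U hU U' hU'
    have h := hclosed (0, U, 0) (by simp [hU]) (0, U', 0) (by simp [hU'])
    simpa [hB] using h
  · rintro hβ ⟨r, U, X⟩ hx ⟨r', U', X'⟩ hy
    simp only [Submodule.mem_prod, Submodule.mem_bot] at hx hy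
    obtain ⟨rfl, hU, -⟩ := hx
    obtain ⟨rfl, hU', -⟩ := hy
    simpa [hB] using hβ U hU U' hU'

section GeneralizedHeisenberg

variable {v z : Type*} [NormedAddCommGroup v] [InnerProductSpace ℝ v]
  [NormedAddCommGroup z] [InnerProductSpace ℝ z]
  {β : v →ₗ[ℝ] v →ₗ[ℝ] z} {J : z →ₗ[ℝ] v →ₗ[ℝ] v}

theorem inner_J_left_eq_neg (halt : β.IsAlt) (hJdef : ∀ (Z : z) (U V : v), ⟪J Z U, V⟫ = ⟪β U V, Z⟫)
    (Z : z) (U V : v) : ⟪J Z U, V⟫ = -⟪U, J Z V⟫ := by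
  rw [hJdef, ← halt.neg, inner_neg_left, ← hJdef, real_inner_comm]

theorem eq_zero_of_J_eq_zero (hJsq : ∀ (Z : z) (U : v), J Z (J Z U) = (-⟪Z, Z⟫) • U)
    {Z : z} (hZ : Z ≠ 0) {U : v} (hU : J Z U = 0) : U = 0 := by
  have h := hJsq Z U
  rwa [hU, map_zero, eq_comm, smul_eq_zero, neg_eq_zero, inner_self_eq_zero,
    or_iff_right hZ] at h

theorem bracket_orthogonal_subset_iff (halt : β.IsAlt)
    (hJdef : ∀ (Z : z) (U V : v), ⟪J Z U, V⟫ = ⟪β U V, Z⟫)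
    (hJsq : ∀ (Z : z) (U : v), J Z (J Z U) = (-⟪Z, Z⟫) • U)
    {v' : Submodule ℝ v} {z' : Submodule ℝ z} (hinv : ∀ Z₀ ∈ z', ∀ P ∈ v', J Z₀ P ∈ v') :
    (∀ U ∈ v'ᗮ, ∀ U' ∈ v'ᗮ, β U U' ∈ z'ᗮ) ↔ (v'ᗮ = ⊥ ∨ z' = ⊥) := by
  constructor
  · intro hβ
    refine or_iff_not_imp_right.2 fun hz' => (Submodule.eq_bot_iff _).2 fun U hU => ?_
    obtain ⟨Z, hZ, hZ0⟩ := Submodule.exists_mem_ne_zero_of_ne_bot hz'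
    have hJU : J Z U ∈ v'ᗮ :=
      Submodule.map_mem_orthogonal_of_skew (inner_J_left_eq_neg halt hJdef Z) (hinv Z hZ) hU
    have hnorm : ⟪J Z U, J Z U⟫ = 0 := by
      rw [hJdef, Submodule.inner_left_of_mem_orthogonal hZ (hβ U hU _ hJU)]
    exact eq_zero_of_J_eq_zero hJsq hZ0 (inner_self_eq_zero.1 hnorm)
  · rintro (hv | hz) U hU U' hU'
    · rw [hv, Submodule.mem_bot] at hU hU'
      simp [hU, hU']
    · simp [hz]

end GeneralizedHeisenberg

theorem statement8_general
    {v z : Type*}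
    [NormedAddCommGroup v] [InnerProductSpace ℝ v]
    [NormedAddCommGroup z] [InnerProductSpace ℝ z]
    (β : v →ₗ[ℝ] v →ₗ[ℝ] z) (J : z →ₗ[ℝ] v →ₗ[ℝ] v)
    (halt : ∀ U : v, β U U = 0)
    (hJdef : ∀ (Z : z) (U V : v), ⟪J Z U, V⟫ = ⟪β U V, Z⟫)
    (hJsq : ∀ (Z : z) (U : v), J Z (J Z U) = (-⟪Z, Z⟫) • U)
    (B : (ℝ × v × z) → (ℝ × v × z) → (ℝ × v × z))
    (hB : ∀ (r r' : ℝ) (U U' : v) (X X' : z),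
      B (r, U, X) (r', U', X')
        = (0, (r / 2) • U' - (r' / 2) • U, β U U' + r • X' - r' • X))
    (v' : Submodule ℝ v) (z' : Submodule ℝ z)
    (hinv : ∀ Z₀ ∈ z', ∀ P ∈ v', J Z₀ P ∈ v') :
    (∀ x ∈ (⊥ : Submodule ℝ ℝ).prod (v'ᗮ.prod z'ᗮ),
      ∀ y ∈ (⊥ : Submodule ℝ ℝ).prod (v'ᗮ.prod z'ᗮ),
        B x y ∈ (⊥ : Submodule ℝ ℝ).prod (v'ᗮ.prod z'ᗮ))
    ↔ (v'ᗮ = ⊥ ∨ z' = ⊥) :=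
  (prod_bot_bracket_closed_iff β B hB v'ᗮ z'ᗮ).trans
    (bracket_orthogonal_subset_iff halt hJdef hJsq hinv)

/-- Let `s = a ⊕ v ⊕ z = ℝ × v × z` be a Damek-Ricci algebra, with bracket
`[(r,U,X),(r',U',X')] = (0, (r/2)U' - (r'/2)U, [U,U'] + rX' - r'X)`.  Let `v' ⊆ v` and
`z' ⊆ z` be linear subspaces such that `J_Z(v') ⊆ v'` for all `Z ∈ z'`.  Let `v''` be the
orthogonal complement of `v'` in `v` and let `z''` be the orthogonal complement of `z'` in
`z`.  Then `v'' ⊕ z''` is a Lie subalgebra of `s` if and only if `v'' = 0` or `z' = 0`. -/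
theorem statement8
    {v z : Type*}
    [NormedAddCommGroup v] [InnerProductSpace ℝ v] [FiniteDimensional ℝ v]
    [NormedAddCommGroup z] [InnerProductSpace ℝ z] [FiniteDimensional ℝ z]
    (β : v →ₗ[ℝ] v →ₗ[ℝ] z) (J : z →ₗ[ℝ] v →ₗ[ℝ] v)
    (halt : ∀ U : v, β U U = 0)
    (hJdef : ∀ (Z : z) (U V : v), ⟪J Z U, V⟫ = ⟪β U V, Z⟫)
    (hJsq : ∀ (Z : z) (U : v), J Z (J Z U) = (-⟪Z, Z⟫) • U)
    (B : (ℝ × v × z) → (ℝ × v × z) → (ℝ × v × z))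
    (hB : ∀ (r r' : ℝ) (U U' : v) (X X' : z),
      B (r, U, X) (r', U', X')
        = (0, (r / 2) • U' - (r' / 2) • U, β U U' + r • X' - r' • X))
    (v' : Submodule ℝ v) (z' : Submodule ℝ z)
    (hinv : ∀ Z₀ ∈ z', ∀ P ∈ v', J Z₀ P ∈ v') :
    (∀ x ∈ (⊥ : Submodule ℝ ℝ).prod (v'ᗮ.prod z'ᗮ),
      ∀ y ∈ (⊥ : Submodule ℝ ℝ).prod (v'ᗮ.prod z'ᗮ),
        B x y ∈ (⊥ : Submodule ℝ ℝ).prod (v'ᗮ.prod z'ᗮ))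
    ↔ (v'ᗮ = ⊥ ∨ z' = ⊥) :=
  statement8_general β J halt hJdef hJsq B hB v' z' hinv
end

section
/- Let s = a ⊕ v ⊕ z be a Damek-Ricci algebra. Let v' ⊆ v and z' ⊆ z be linear subspaces such that J_Z(v') ⊆ v' for all Z ∈ z'. Let V, W ∈ v', Y, Z ∈ z', r, t ∈ ℝ, let U ∈ v be orthogonal to v' and let X ∈ z be orthogonal to z'. Set ξ := V + Y + rA, η := U + X, ζ := W + Z + tA. Then ⟨[ξ,η], ζ⟩ + ⟨[ξ,ζ], η⟩ + ⟨ξ, [η,ζ]⟩ = ⟨J_X V, W⟩. -/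
/-!
Expanding the three brackets, every term except `⟪[V, W], X⟫ = ⟪J_X V, W⟫` pairs a vector of `v'`
or `z'` with one of `v'ᗮ` or `z'ᗮ`, or is of the form `⟪[P, U], Z₀⟫ = ⟪J_{Z₀} P, U⟫` with
`P ∈ v'`, `Z₀ ∈ z'`, `U ∈ v'ᗮ`, which vanishes because `J_{Z₀} P ∈ v'`.
-/

open scoped RealInnerProductSpace

section

variable {v z : Type*} [NormedAddCommGroup v] [InnerProductSpace ℝ v]
  [NormedAddCommGroup z] [InnerProductSpace ℝ z]
  {β : v →ₗ[ℝ] v →ₗ[ℝ] z} {J : z →ₗ[ℝ] v →ₗ[ℝ] v} {v' : Submodule ℝ v}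

theorem inner_apply_eq_zero_of_mem_orthogonal
    (hJdef : ∀ (Z : z) (U V : v), ⟪J Z U, V⟫ = ⟪β U V, Z⟫)
    {Z₀ : z} {P U : v} (hJP : J Z₀ P ∈ v') (hU : U ∈ v'ᗮ) : ⟪β P U, Z₀⟫ = 0 := by
  rw [← hJdef]
  exact Submodule.inner_right_of_mem_orthogonal hJP hU

theorem inner_apply_swap_eq_zero_of_mem_orthogonal (halt : β.IsAlt)
    (hJdef : ∀ (Z : z) (U V : v), ⟪J Z U, V⟫ = ⟪β U V, Z⟫)
    {Z₀ : z} {P U : v} (hJP : J Z₀ P ∈ v') (hU : U ∈ v'ᗮ) : ⟪β U P, Z₀⟫ = 0 := by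
  rw [← halt.neg, inner_neg_left, inner_apply_eq_zero_of_mem_orthogonal hJdef hJP hU, neg_zero]

end

theorem statement9_general
    {v z : Type*}
    [NormedAddCommGroup v] [InnerProductSpace ℝ v]
    [NormedAddCommGroup z] [InnerProductSpace ℝ z]
    (β : v →ₗ[ℝ] v →ₗ[ℝ] z) (J : z →ₗ[ℝ] v →ₗ[ℝ] v)
    (halt : ∀ U : v, β U U = 0)
    (hJdef : ∀ (Z : z) (U V : v), ⟪J Z U, V⟫ = ⟪β U V, Z⟫)
    (B : (ℝ × v × z) → (ℝ × v × z) → (ℝ × v × z))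
    (hB : ∀ (r r' : ℝ) (U U' : v) (X X' : z),
      B (r, U, X) (r', U', X')
        = (0, (r / 2) • U' - (r' / 2) • U, β U U' + r • X' - r' • X))
    (ip : (ℝ × v × z) → (ℝ × v × z) → ℝ)
    (hip : ∀ (r s : ℝ) (U V : v) (X Y : z),
      ip (r, U, X) (s, V, Y) = r * s + ⟪U, V⟫ + ⟪X, Y⟫)
    (v' : Submodule ℝ v) (z' : Submodule ℝ z)
    (hinv : ∀ Z₀ ∈ z', ∀ P ∈ v', J Z₀ P ∈ v')
    (V W : v) (hV : V ∈ v') (hW : W ∈ v')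
    (Y Z : z) (hY : Y ∈ z') (hZ : Z ∈ z')
    (r t : ℝ)
    (U : v) (hU : U ∈ v'ᗮ) (X : z) (hX : X ∈ z'ᗮ) :
    ip (B (r, V, Y) (0, U, X)) (t, W, Z)
      + ip (B (r, V, Y) (t, W, Z)) (0, U, X)
      + ip (r, V, Y) (B (0, U, X) (t, W, Z)) = ⟪J X V, W⟫ := by
  have hVU : ⟪V, U⟫ = 0 := Submodule.inner_right_of_mem_orthogonal hV hU
  have hWU : ⟪W, U⟫ = 0 := Submodule.inner_right_of_mem_orthogonal hW hU
  have hUW : ⟪U, W⟫ = 0 := Submodule.inner_left_of_mem_orthogonal hW hU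
  have hYX : ⟪Y, X⟫ = 0 := Submodule.inner_right_of_mem_orthogonal hY hX
  have hZX : ⟪Z, X⟫ = 0 := Submodule.inner_right_of_mem_orthogonal hZ hX
  have hXZ : ⟪X, Z⟫ = 0 := Submodule.inner_left_of_mem_orthogonal hZ hX
  have hVUZ : ⟪β V U, Z⟫ = 0 :=
    inner_apply_eq_zero_of_mem_orthogonal hJdef (hinv Z hZ V hV) hU
  have hUWY : ⟪Y, β U W⟫ = 0 := by
    rw [real_inner_comm]
    exact inner_apply_swap_eq_zero_of_mem_orthogonal halt hJdef (hinv Y hY W hW) hU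
  rw [hB, hB, hB, hip, hip, hip, hJdef]
  simp only [inner_add_left, inner_add_right, inner_sub_left, inner_sub_right,
    real_inner_smul_left, real_inner_smul_right, hVU, hWU, hUW, hYX, hZX, hXZ, hVUZ, hUWY]
  ring

/-- Let `s = a ⊕ v ⊕ z = ℝ × v × z` be a Damek-Ricci algebra, with bracket
`[(r,U,X),(r',U',X')] = (0, (r/2)U' - (r'/2)U, [U,U'] + rX' - r'X)` and inner product
`⟨(r,U,X),(s,V,Y)⟩ = rs + ⟨U,V⟩ + ⟨X,Y⟩` (so `A = (1,0,0)`).  Let `v' ⊆ v` and `z' ⊆ z` be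
linear subspaces such that `J_Z(v') ⊆ v'` for all `Z ∈ z'`.  Let `V, W ∈ v'`, `Y, Z ∈ z'`,
`r, t ∈ ℝ`, let `U ∈ v` be orthogonal to `v'` and let `X ∈ z` be orthogonal to `z'`.  Set
`ξ := V + Y + rA`, `η := U + X`, `ζ := W + Z + tA`.  Then
`⟨[ξ,η], ζ⟩ + ⟨[ξ,ζ], η⟩ + ⟨ξ, [η,ζ]⟩ = ⟨J_X V, W⟩`. -/
theorem statement9
    {v z : Type*}
    [NormedAddCommGroup v] [InnerProductSpace ℝ v] [FiniteDimensional ℝ v]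
    [NormedAddCommGroup z] [InnerProductSpace ℝ z] [FiniteDimensional ℝ z]
    (β : v →ₗ[ℝ] v →ₗ[ℝ] z) (J : z →ₗ[ℝ] v →ₗ[ℝ] v)
    (halt : ∀ U : v, β U U = 0)
    (hJdef : ∀ (Z : z) (U V : v), ⟪J Z U, V⟫ = ⟪β U V, Z⟫)
    (hJsq : ∀ (Z : z) (U : v), J Z (J Z U) = (-⟪Z, Z⟫) • U)
    (B : (ℝ × v × z) → (ℝ × v × z) → (ℝ × v × z))
    (hB : ∀ (r r' : ℝ) (U U' : v) (X X' : z),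
      B (r, U, X) (r', U', X')
        = (0, (r / 2) • U' - (r' / 2) • U, β U U' + r • X' - r' • X))
    (ip : (ℝ × v × z) → (ℝ × v × z) → ℝ)
    (hip : ∀ (r s : ℝ) (U V : v) (X Y : z),
      ip (r, U, X) (s, V, Y) = r * s + ⟪U, V⟫ + ⟪X, Y⟫)
    (v' : Submodule ℝ v) (z' : Submodule ℝ z)
    (hinv : ∀ Z₀ ∈ z', ∀ P ∈ v', J Z₀ P ∈ v')
    (V W : v) (hV : V ∈ v') (hW : W ∈ v')
    (Y Z : z) (hY : Y ∈ z') (hZ : Z ∈ z')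
    (r t : ℝ)
    (U : v) (hU : U ∈ v'ᗮ) (X : z) (hX : X ∈ z'ᗮ) :
    ip (B (r, V, Y) (0, U, X)) (t, W, Z)
      + ip (B (r, V, Y) (t, W, Z)) (0, U, X)
      + ip (r, V, Y) (B (0, U, X) (t, W, Z)) = ⟪J X V, W⟫ :=
  statement9_general β J halt hJdef B hB ip hip v' z' hinv V W hV hW Y Z hY hZ r t U hU X hX
end

section
/- Let k₊, k₋ ≥ 1 and let V₁ ∈ ℍ^{k₊} and V₂ ∈ ℍ^{k₋} be nonzero vectors. Consider the action of the group Sp(1) × Sp(k₊) × Sp(k₋) on ℍ^{k₊} ⊕ ℍ^{k₋} given by (q, g, h)·(x, y) = (g·x·conj(q), h·y·conj(q)), where q is a unit quaternion and g, h are quaternionic unitary matrices. Let Σ := ℝ·(V₁, 0) + ℝ·(0, V₂). Then: (i) for every (x, y) ∈ ℍ^{k₊} ⊕ ℍ^{k₋} there exists a group element mapping (x, y) into Σ; and (ii) for every purely imaginary quaternion ζ (Re ζ = 0), all quaternionic skew-Hermitian matrices A ∈ Mat_{k₊}(ℍ), B ∈ Mat_{k₋}(ℍ) with A* = −A, B*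 = −B, and all p = (p₁, p₂) ∈ Σ and w ∈ Σ, one has Re⟨(A·p₁ − p₁·ζ, B·p₂ − p₂·ζ), w⟩ = 0, where ⟨·,·⟩ is the standard quaternionic Hermitian inner product on ℍ^{k₊} ⊕ ℍ^{k₋}. Hence the two-dimensional real subspace Σ meets every orbit of this action and meets each orbit orthogonally, so the action is polar with section Σ. -/
/-!
Part (i) needs only `Sp(k)`: it acts transitively on each sphere of `ℍ^k`, so `x` can be moved
to the real multiple `(|x| / |V|) • V`. To move `x` to `y` with `|x| = |y|`, first replace `y` by
`y u` for a unit quaternion `u` making `⟨y u, x⟩` real; then the quaternionic Householder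
reflection in `x - y u` sends `x` to `y u`, and the rank-one unitary `1 + y (u* - 1) y* / |y|²`
sends `y u` back to `y`.

Part (ii): for `p = c V` and `w = c' V` the quantity is `c c' Re(⟨A V, V⟩ - ζ* |V|²)`, and both
terms are real parts of purely imaginary quaternions, by skew-Hermitianity of `A` and `Re ζ = 0`.
-/

open Matrix
open scoped Quaternion

namespace Matrix

variable {n α : Type*} [DecidableEq n] [Ring α] [StarRing α]

def rankOneUpdate (v : n → α) (β : α) : Matrix n n α := 1 + vecMulVec v (β • star v)

theorem rankOneUpdate_zero (v : n → α) : rankOneUpdate v 0 = 1 := by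
  simp [rankOneUpdate]

theorem conjTranspose_rankOneUpdate (v : n → α) (β : α) :
    (rankOneUpdate v β)ᴴ = rankOneUpdate v (star β) := by
  rw [rankOneUpdate, rankOneUpdate, conjTranspose_add, conjTranspose_one, conjTranspose_vecMulVec]
  congr 1
  ext i j
  simp [vecMulVec_apply, mul_assoc]

variable [Fintype n]

theorem rankOneUpdate_mulVec (v : n → α) (β : α) (x : n → α) :
    rankOneUpdate v β *ᵥ x = x + MulOpposite.op (β * (star v ⬝ᵥ x)) • v := by
  rw [rankOneUpdate, add_mulVec, one_mulVec, vecMulVec_mulVec, smul_dotProduct, smul_eq_mul]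

theorem rankOneUpdate_mul (v : n → α) (β₁ β₂ : α) :
    rankOneUpdate v β₁ * rankOneUpdate v β₂ =
      rankOneUpdate v (β₁ + β₂ + β₁ * (star v ⬝ᵥ v) * β₂) := by
  simp only [rankOneUpdate, add_mul, mul_add, one_mul, mul_one, vecMulVec_mul_vecMulVec,
    smul_dotProduct, smul_eq_mul, add_smul, vecMulVec_add, smul_smul]
  abel

theorem conjTranspose_mul_self_rankOneUpdate (v : n → α) {β : α}
    (hβ : star β + β + star β * (star v ⬝ᵥ v) * β = 0) :
    (rankOneUpdate v β)ᴴ * rankOneUpdate v β = 1 := by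
  rw [conjTranspose_rankOneUpdate, rankOneUpdate_mul, hβ, rankOneUpdate_zero]

end Matrix

namespace Quaternion

instance : StarModule ℝ ℍ[ℝ] := ⟨fun r a => by rw [star_smul, star_trivial r]⟩

variable {n : Type*} [Fintype n]

theorem star_dotProduct_self (v : n → ℍ[ℝ]) :
    star v ⬝ᵥ v = ((∑ i, normSq (v i) : ℝ) : ℍ[ℝ]) := by
  simp only [dotProduct, Pi.star_apply, star_mul_self, ← algebraMap_def, map_sum]

theorem sum_normSq_pos {v : n → ℍ[ℝ]} (hv : v ≠ 0) : 0 < ∑ i, normSq (v i) := by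
  obtain ⟨i, hi⟩ := Function.ne_iff.mp hv
  exact Finset.sum_pos' (fun j _ => normSq_nonneg)
    ⟨i, Finset.mem_univ i, normSq_nonneg.lt_of_ne' (normSq_eq_zero.not.mpr hi)⟩

theorem star_op_smul_dotProduct (u : ℍ[ℝ]) (v w : n → ℍ[ℝ]) :
    star (MulOpposite.op u • v) ⬝ᵥ w = star u * (star v ⬝ᵥ w) := by
  simp [dotProduct, Finset.mul_sum, mul_assoc]

theorem dotProduct_op_smul (u : ℍ[ℝ]) (v w : n → ℍ[ℝ]) :
    v ⬝ᵥ MulOpposite.op u • w = (v ⬝ᵥ w) * u := by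
  simp [dotProduct, Finset.sum_mul, mul_assoc]

theorem exists_star_mul_self_eq_one_and_star_mul_eq_coe (a : ℍ[ℝ]) :
    ∃ u : ℍ[ℝ], star u * u = 1 ∧ ∃ r : ℝ, star u * a = r := by
  rcases eq_or_ne a 0 with rfl | ha
  · exact ⟨1, by simp, 0, by simp⟩
  have hna : ‖a‖ ≠ 0 := norm_ne_zero_iff.mpr ha
  refine ⟨‖a‖⁻¹ • a, ?_, ‖a‖⁻¹ * normSq a, ?_⟩
  · rw [star_smul, smul_mul_smul_comm, star_mul_self, normSq_eq_norm_mul_self, smul_coe]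
    field_simp
    simp
  · rw [star_smul, smul_mul_assoc, star_mul_self, smul_coe]

theorem re_star_mulVec_dotProduct_self {A : Matrix n n ℍ[ℝ]} (hA : Aᴴ = -A) (v : n → ℍ[ℝ]) :
    (star (A *ᵥ v) ⬝ᵥ v).re = 0 := by
  have h₁ : star (A *ᵥ v) ⬝ᵥ v = -(star v ⬝ᵥ A *ᵥ v) := by
    rw [star_mulVec, hA, vecMul_neg, neg_dotProduct, dotProduct_mulVec]
  have h₂ : star (A *ᵥ v) ⬝ᵥ v = star (star v ⬝ᵥ A *ᵥ v) := star_dotProduct _ _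
  have h₃ := congrArg QuaternionAlgebra.re (h₁.symm.trans h₂)
  rw [re_neg, re_star] at h₃
  rw [h₁, re_neg]
  linarith

theorem re_star_tangent_dotProduct {A : Matrix n n ℍ[ℝ]} (hA : Aᴴ = -A) {ζ : ℍ[ℝ]}
    (hζ : ζ.re = 0) (v : n → ℍ[ℝ]) (c c' : ℝ) :
    (star (fun i => (A *ᵥ (c • v)) i - (c • v) i * ζ) ⬝ᵥ (c' • v)).re = 0 := by
  have hfun : (fun i => (A *ᵥ (c • v)) i - (c • v) i * ζ) =
      c • (A *ᵥ v - MulOpposite.op ζ • v) := by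
    funext i
    simp [mulVec_smul, smul_sub]
  rw [hfun, StarModule.star_smul, star_trivial c, smul_dotProduct, dotProduct_smul, star_sub,
    sub_dotProduct, star_op_smul_dotProduct, star_dotProduct_self, mul_coe_eq_smul]
  simp [re_star_mulVec_dotProduct_self hA, hζ]

variable [DecidableEq n]

theorem exists_unitary_mulVec_eq_op_smul (v : n → ℍ[ℝ]) {l : ℍ[ℝ]} (hl : star l * l = 1) :
    ∃ g : Matrix n n ℍ[ℝ], gᴴ * g = 1 ∧ g *ᵥ v = MulOpposite.op l • v := by
  rcases eq_or_ne v 0 with rfl | hv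
  · exact ⟨1, by simp, by simp⟩
  set s := ∑ i, normSq (v i)
  have hs : s ≠ 0 := (sum_normSq_pos hv).ne'
  have hvv : star v ⬝ᵥ v = (s : ℍ[ℝ]) := star_dotProduct_self v
  refine ⟨rankOneUpdate v ((s⁻¹ : ℝ) • (l - 1)), ?_, ?_⟩
  · have hcancel (a b : ℍ[ℝ]) : s⁻¹ • a * ↑s * s⁻¹ • b = s⁻¹ • (a * b) := by
      rw [smul_mul_assoc, ← coe_commutes, coe_mul_eq_smul, smul_mul_assoc, smul_mul_smul_comm,
        smul_smul, mul_inv_cancel₀ hs, mul_one]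
    have hexpand : star l - 1 + (l - 1) + (star l - 1) * (l - 1) = star l * l - 1 := by
      noncomm_ring
    apply conjTranspose_mul_self_rankOneUpdate
    rw [hvv, star_smul, hcancel, ← smul_add, ← smul_add, star_sub, star_one, hexpand, hl, sub_self,
      smul_zero]
  · rw [rankOneUpdate_mulVec, hvv, smul_mul_assoc, ← coe_commutes, coe_mul_eq_smul, smul_smul,
      inv_mul_cancel₀ hs, one_smul, MulOpposite.op_sub, sub_smul, MulOpposite.op_one, one_smul]
    abel

theorem exists_unitary_mulVec_eq_of_dotProduct_eq_coe {x y : n → ℍ[ℝ]}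
    (hxy : star x ⬝ᵥ x = star y ⬝ᵥ y) {r : ℝ} (hr : star y ⬝ᵥ x = r) :
    ∃ g : Matrix n n ℍ[ℝ], gᴴ * g = 1 ∧ g *ᵥ x = y := by
  rcases eq_or_ne x y with rfl | hne
  · exact ⟨1, by simp, by simp⟩
  set w := x - y
  set d := ∑ i, normSq (x i) - r
  have hwx : star w ⬝ᵥ x = (d : ℍ[ℝ]) := by
    rw [star_sub, sub_dotProduct, hr, star_dotProduct_self, coe_sub]
  have hww : star w ⬝ᵥ w = ((2 * d : ℝ) : ℍ[ℝ]) := by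
    rw [dotProduct_sub, hwx, star_sub, sub_dotProduct, star_dotProduct, hr, star_coe, ← hxy,
      star_dotProduct_self, ← coe_sub, ← coe_sub]
    congr 1
    ring
  have hd : d ≠ 0 := by
    have hpos : 0 < ∑ i, normSq (w i) := sum_normSq_pos (sub_ne_zero.mpr hne)
    rw [coe_injective ((star_dotProduct_self w).symm.trans hww)] at hpos
    linarith
  refine ⟨rankOneUpdate w ((-d⁻¹ : ℝ) : ℍ[ℝ]), ?_, ?_⟩
  · apply conjTranspose_mul_self_rankOneUpdate
    rw [hww, star_coe]
    norm_cast
    field_simp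
    norm_num
  · rw [rankOneUpdate_mulVec, hwx]
    norm_cast
    rw [neg_mul, inv_mul_cancel₀ hd]
    simp [w]

theorem exists_unitary_mulVec_eq {x y : n → ℍ[ℝ]} (hxy : star x ⬝ᵥ x = star y ⬝ᵥ y) :
    ∃ g : Matrix n n ℍ[ℝ], gᴴ * g = 1 ∧ g *ᵥ x = y := by
  obtain ⟨u, hu, r, hr⟩ := exists_star_mul_self_eq_one_and_star_mul_eq_coe (star y ⬝ᵥ x)
  have hu' : u * star u = 1 := by rw [self_mul_star, ← star_mul_self, hu]
  obtain ⟨h, hh, hhx⟩ :=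
    exists_unitary_mulVec_eq_of_dotProduct_eq_coe (x := x) (y := MulOpposite.op u • y)
      (by rw [star_op_smul_dotProduct, dotProduct_op_smul, hxy, star_dotProduct_self,
        coe_commutes, ← mul_assoc, hu, one_mul])
      (by rw [star_op_smul_dotProduct, hr])
  obtain ⟨p, hp, hpy⟩ := exists_unitary_mulVec_eq_op_smul (MulOpposite.op u • y) (l := star u)
    (by rw [star_star, hu'])
  refine ⟨p * h, ?_, ?_⟩
  · rw [conjTranspose_mul, Matrix.mul_assoc, ← Matrix.mul_assoc pᴴ, hp, Matrix.one_mul, hh]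
  · rw [← mulVec_mulVec, hhx, hpy, smul_smul, ← MulOpposite.op_mul, hu', MulOpposite.op_one,
      one_smul]

theorem exists_unitary_mulVec_eq_smul (x : n → ℍ[ℝ]) {v : n → ℍ[ℝ]} (hv : v ≠ 0) :
    ∃ g : Matrix n n ℍ[ℝ], gᴴ * g = 1 ∧ ∃ c : ℝ, g *ᵥ x = c • v := by
  set c := √((∑ i, normSq (x i)) / ∑ i, normSq (v i))
  obtain ⟨g, hg, hgx⟩ := exists_unitary_mulVec_eq (x := x) (y := c • v) (by
    rw [StarModule.star_smul, star_trivial c, smul_dotProduct, dotProduct_smul, smul_smul,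
      star_dotProduct_self, star_dotProduct_self, smul_coe, Real.mul_self_sqrt
        (div_nonneg (Finset.sum_nonneg fun i _ => normSq_nonneg) (sum_normSq_pos hv).le),
      div_mul_cancel₀ _ (sum_normSq_pos hv).ne'])
  exact ⟨g, hg, c, hgx⟩

end Quaternion

theorem statement14_general (kp km : ℕ)
    (V₁ : Fin kp → ℍ[ℝ]) (V₂ : Fin km → ℍ[ℝ]) (hV₁ : V₁ ≠ 0) (hV₂ : V₂ ≠ 0) :
    (∀ (x : Fin kp → ℍ[ℝ]) (y : Fin km → ℍ[ℝ]),
      ∃ (q : ℍ[ℝ]) (g : Matrix (Fin kp) (Fin kp) ℍ[ℝ]) (h : Matrix (Fin km) (Fin km) ℍ[ℝ]),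
        q * star q = 1 ∧ gᴴ * g = 1 ∧ hᴴ * h = 1 ∧
        ∃ c d : ℝ, g.mulVec (fun i => x i * star q) = c • V₁ ∧
          h.mulVec (fun i => y i * star q) = d • V₂) ∧
    (∀ ζ : ℍ[ℝ], ζ.re = 0 →
      ∀ (A : Matrix (Fin kp) (Fin kp) ℍ[ℝ]) (B : Matrix (Fin km) (Fin km) ℍ[ℝ]),
        Aᴴ = -A → Bᴴ = -B →
        ∀ c d c' d' : ℝ,
          (star (fun i => A.mulVec (c • V₁) i - (c • V₁) i * ζ) ⬝ᵥ (c' • V₁)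
            + star (fun i => B.mulVec (d • V₂) i - (d • V₂) i * ζ) ⬝ᵥ (d' • V₂)).re
            = 0) := by
  refine ⟨fun x y => ?_, fun ζ hζ A B hA hB c d c' d' => ?_⟩
  · obtain ⟨g, hg, c, hgx⟩ := Quaternion.exists_unitary_mulVec_eq_smul x hV₁
    obtain ⟨h, hh, d, hhy⟩ := Quaternion.exists_unitary_mulVec_eq_smul y hV₂
    exact ⟨1, g, h, by simp, hg, hh, c, d, by simpa using hgx, by simpa using hhy⟩
  · rw [Quaternion.re_add, Quaternion.re_star_tangent_dotProduct hA hζ,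
      Quaternion.re_star_tangent_dotProduct hB hζ, add_zero]

/-- Let `k₊, k₋ ≥ 1` and let `V₁ ∈ ℍ^{k₊}`, `V₂ ∈ ℍ^{k₋}` be nonzero
vectors.  Consider the action of `Sp(1) × Sp(k₊) × Sp(k₋)` on `ℍ^{k₊} ⊕ ℍ^{k₋}` given by
`(q, g, h)·(x, y) = (g·x·conj(q), h·y·conj(q))`, where `q` is a unit quaternion and `g, h`
are quaternionic unitary matrices.  Let `Σ := ℝ·(V₁,0) + ℝ·(0,V₂)`.  Then: (i) every
`(x, y)` can be mapped into `Σ` by a group element; and (ii) for every purely imaginary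
quaternion `ζ`, all quaternionic skew-Hermitian matrices `A`, `B`, and all `p, w ∈ Σ`
(written `p = (c•V₁, d•V₂)`, `w = (c'•V₁, d'•V₂)`), one has
`Re⟨(A·p₁ - p₁·ζ, B·p₂ - p₂·ζ), w⟩ = 0`.  Hence the two-dimensional real subspace `Σ` meets
every orbit of this action and meets each orbit orthogonally, so the action is polar with
section `Σ`. -/
theorem statement14 (kp km : ℕ) (hkp : 1 ≤ kp) (hkm : 1 ≤ km)
    (V₁ : Fin kp → ℍ[ℝ]) (V₂ : Fin km → ℍ[ℝ]) (hV₁ : V₁ ≠ 0) (hV₂ : V₂ ≠ 0) :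
    (∀ (x : Fin kp → ℍ[ℝ]) (y : Fin km → ℍ[ℝ]),
      ∃ (q : ℍ[ℝ]) (g : Matrix (Fin kp) (Fin kp) ℍ[ℝ]) (h : Matrix (Fin km) (Fin km) ℍ[ℝ]),
        q * star q = 1 ∧ gᴴ * g = 1 ∧ hᴴ * h = 1 ∧
        ∃ c d : ℝ, g.mulVec (fun i => x i * star q) = c • V₁ ∧
          h.mulVec (fun i => y i * star q) = d • V₂) ∧
    (∀ ζ : ℍ[ℝ], ζ.re = 0 →
      ∀ (A : Matrix (Fin kp) (Fin kp) ℍ[ℝ]) (B : Matrix (Fin km) (Fin km) ℍ[ℝ]),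
        Aᴴ = -A → Bᴴ = -B →
        ∀ c d c' d' : ℝ,
          (star (fun i => A.mulVec (c • V₁) i - (c • V₁) i * ζ) ⬝ᵥ (c' • V₁)
            + star (fun i => B.mulVec (d • V₂) i - (d • V₂) i * ζ) ⬝ᵥ (d' • V₂)).re
            = 0) :=
  statement14_general kp km V₁ V₂ hV₁ hV₂
end
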